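/- Let p be an odd prime, let s be an integer with 0 < s < p−1, and let a, a′ be integers with 0 < a, a′ < p and a′ ≡ s·a (mod p). Then b_{1,s}(a) = 0 in F_p (i.e., the residue class of a in F_p is a root of the polynomial b_{1,s}(α)) if and only if a + a′ < p. -/

import Mathlib

noncomputable def binomF {K : Type*} [Field K] (f : K) (m : ℕ) : K :=
  Polynomial.eval f (descPochhammer K m) / (m.factorial : K)

noncomputable def bPoly (p : ℕ) [Fact p.Prime] (r s : ℕ) : Polynomial (ZMod p) :=
  ∑ k ∈ Finset.range p,
    Polynomial.C ((-(r : ZMod p) / (s : ZMod p)) ^ k /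
        (((p - 1 - k).factorial : ZMod p) * (k.factorial : ZMod p))) *
      Polynomial.eval (Polynomial.C (r : ZMod p) * Polynomial.X - 1)
        (descPochhammer (Polynomial (ZMod p)) (p - 1 - k)) *
      Polynomial.eval (Polynomial.C (s : ZMod p) * Polynomial.X - 1)
        (descPochhammer (Polynomial (ZMod p)) k)

/-!
With `a' ≡ s a` and `t = -1/s`, the value `b_{1,s}(a)` is `∑ₖ tᵏ C(a-1, p-1-k) C(a'-1, k)`.
Over `𝔽_p` we have `a - 1 ≡ -(p - a) - 1`, so upper negation gives
`C(a-1, j) = (-1)ʲ C(p-a+j, j)`; the trinomial revision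
`C(a'-1, p-a+j) C(p-a+j, p-a) = C(a'-1, p-a) C(a+a'-p-1, j)` then collapses the sum to
`t^(p-a) C(a'-1, p-a) (1-t)^(a+a'-p-1)`. As `t ≠ 0` and `1 - t = (s+1)/s ≠ 0`, this vanishes iff
`C(a'-1, p-a) ≡ 0`, i.e. iff `a + a' ≤ p`; and `a + a' = p` is impossible, as it forces `s ≡ -1`.
-/

open Finset Polynomial Nat

lemma sum_range_pow_mul_choose {R : Type*} [CommRing R] (x : R) {e N : ℕ} (h : e < N) :
    ∑ j ∈ range N, x ^ j * (e.choose j : R) = (1 + x) ^ e := by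
  rw [add_comm, add_pow]
  refine (sum_subset (range_subset_range.mpr h) fun j _ hj => ?_).symm.trans
    (sum_congr rfl fun j _ => ?_)
  · rw [choose_eq_zero_of_lt (by simpa using hj), Nat.cast_zero, mul_zero]
  · rw [one_pow, mul_one]

namespace ZMod

lemma natCast_ne_zero_of_lt {n p : ℕ} (hn : n ≠ 0) (hnp : n < p) : (n : ZMod p) ≠ 0 := by
  rw [Ne, natCast_eq_zero_iff]
  exact fun h => absurd (Nat.le_of_dvd (by omega) h) (by omega)

variable {p : ℕ} [Fact p.Prime]

lemma natCast_factorial_ne_zero {n : ℕ} (hn : n < p) : (n ! : ZMod p) ≠ 0 := by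
  rw [Ne, natCast_eq_zero_iff, Nat.Prime.dvd_factorial Fact.out]
  omega

lemma natCast_choose_eq_zero_iff {n k : ℕ} (hn : n < p) :
    (n.choose k : ZMod p) = 0 ↔ n < k := by
  refine ⟨fun h => ?_, fun h => by rw [choose_eq_zero_of_lt h, Nat.cast_zero]⟩
  by_contra! hk
  have hdvd : n.choose k ∣ n ! :=
    Dvd.intro (k ! * (n - k)!) (by rw [← mul_assoc, choose_mul_factorial_mul_factorial hk])
  exact natCast_factorial_ne_zero hn ((natCast_eq_zero_iff _ _).mpr
    (((natCast_eq_zero_iff _ _).mp h).trans hdvd))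

lemma natCast_choose_eq_neg_one_pow_mul_choose {m q j : ℕ} (h : m + q + 1 = p) (hj : j < p) :
    (m.choose j : ZMod p) = (-1) ^ j * ((q + j).choose j : ℕ) := by
  have hm : (m : ZMod p) = -((q + 1 : ℕ) : ZMod p) := by
    rw [eq_neg_iff_add_eq_zero, ← Nat.cast_add, ← add_assoc, h, natCast_self]
  apply mul_left_cancel₀ (natCast_factorial_ne_zero hj)
  calc (j ! : ZMod p) * m.choose j = (descPochhammer (ZMod p) j).eval (m : ZMod p) := by
        rw [descPochhammer_eval_eq_descFactorial, descFactorial_eq_factorial_mul_choose]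
        push_cast; rfl
    _ = (-1) ^ j * ((-1) ^ j * (descPochhammer (ZMod p) j).eval (-((q + 1 : ℕ) : ZMod p))) := by
        rw [← mul_assoc, ← mul_pow, neg_one_mul, neg_neg, one_pow, one_mul, hm]
    _ = (-1) ^ j * (ascPochhammer (ZMod p) j).eval ((q + 1 : ℕ) : ZMod p) := by
        rw [← ascPochhammer_eval_neg_eq_descPochhammer, neg_neg]
    _ = _ := by
        rw [ascPochhammer_nat_eq_natCast_ascFactorial, ascFactorial_eq_factorial_mul_choose]
        push_cast; ring


theorem sum_range_pow_mul_choose_mul_choose {m n : ℕ} (hm : m < p) (hn : n < p) (t : ZMod p) :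
    ∑ k ∈ range p, t ^ k * (m.choose (p - 1 - k) : ZMod p) * (n.choose k : ZMod p) =
      t ^ (p - 1 - m) * (n.choose (p - 1 - m) : ZMod p) * (1 - t) ^ (n - (p - 1 - m)) := by
  set q := p - 1 - m
  have hp : p = q + (m + 1) := by omega
  have hlow : ∀ k ∈ range q, t ^ k * (m.choose (p - 1 - k) : ZMod p) * (n.choose k : ZMod p) = 0 :=
    fun k hk => by rw [choose_eq_zero_of_lt (by simp at hk; omega)]; simp
  have hhigh : ∀ j ∈ range (m + 1),
      t ^ (q + j) * (m.choose (p - 1 - (q + j)) : ZMod p) * (n.choose (q + j) : ZMod p) =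
        t ^ q * (n.choose q : ZMod p) * ((-t) ^ j * ((n - q).choose j : ZMod p)) := by
    intro j hj
    have hjm : j ≤ m := by simp at hj; omega
    rw [show p - 1 - (q + j) = m - j by omega, choose_symm hjm,
      natCast_choose_eq_neg_one_pow_mul_choose (by omega : m + q + 1 = p) (by omega),
      ← choose_symm_add]
    have hmul := congrArg (Nat.cast : ℕ → ZMod p) (choose_mul (n := n) (le_add_right q j))
    rw [add_tsub_cancel_left] at hmul
    push_cast at hmul
    linear_combination (-1) ^ j * t ^ (q + j) * hmul
  rw [show range p = range (q + (m + 1)) by rw [← hp], sum_range_add, sum_eq_zero hlow, zero_add,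
    sum_congr rfl hhigh, ← mul_sum,
    sum_range_pow_mul_choose _ (by omega), sub_eq_add_neg]

end ZMod

lemma eval_eval_descPochhammer_C_mul_X_sub_one {R : Type*} [CommRing R] (c x : R) (k : ℕ) :
    ((descPochhammer R[X] k).eval (C c * X - 1)).eval x = (descPochhammer R k).eval (c * x - 1) := by
  rw [← descPochhammer_map C, eval_map, ← comp, eval_comp]
  simp

section

variable {p : ℕ} [Fact p.Prime]

lemma eval_bPoly_eq_sum_choose {r s m n : ℕ} {x : ZMod p}
    (hm : (r : ZMod p) * x - 1 = m) (hn : (s : ZMod p) * x - 1 = n) :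
    (bPoly p r s).eval x =
      ∑ k ∈ range p,
        (-(r : ZMod p) / s) ^ k * (m.choose (p - 1 - k) : ZMod p) * (n.choose k : ZMod p) := by
  rw [bPoly, eval_finsetSum]
  refine sum_congr rfl fun k hk => ?_
  have hk : k < p := mem_range.mp hk
  have hfac₁ := ZMod.natCast_factorial_ne_zero (p := p) (show p - 1 - k < p by omega)
  have hfac₂ := ZMod.natCast_factorial_ne_zero hk
  simp only [eval_mul, eval_C, eval_eval_descPochhammer_C_mul_X_sub_one, hm, hn,
    descPochhammer_eval_eq_descFactorial, descFactorial_eq_factorial_mul_choose, Nat.cast_mul]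
  field_simp

theorem eval_bPoly_one {s a a' : ℕ} (ha0 : 0 < a) (hap : a ≤ p) (ha'0 : 0 < a') (ha'p : a' < p)
    (hmod : (s : ZMod p) * a = a') :
    (bPoly p 1 s).eval (a : ZMod p) =
      (-(s : ZMod p)⁻¹) ^ (p - a) * ((a' - 1).choose (p - a) : ZMod p) *
        (1 + (s : ZMod p)⁻¹) ^ (a' - 1 - (p - a)) := by
  rw [eval_bPoly_eq_sum_choose (m := a - 1) (n := a' - 1) (by rw [Nat.cast_sub ha0]; simp)
      (by rw [Nat.cast_sub ha'0, hmod]; simp),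
    Nat.cast_one, ZMod.sum_range_pow_mul_choose_mul_choose (by omega) (by omega),
    show p - 1 - (a - 1) = p - a by omega, neg_div, one_div, sub_neg_eq_add]

end

theorem stmt12_general (p s a a' : ℕ) [Fact p.Prime]
    (hs0 : 0 < s) (hsp : s < p - 1)
    (ha0 : 0 < a) (hap : a < p) (ha'0 : 0 < a') (ha'p : a' < p)
    (hmod : a' ≡ s * a [MOD p]) :
    (bPoly p 1 s).eval (a : ZMod p) = 0 ↔ a + a' < p := by
  have hmod' : (s : ZMod p) * a = a' := by
    exact_mod_cast ((ZMod.natCast_eq_natCast_iff _ _ _).mpr hmod).symm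
  have hs : (s : ZMod p) ≠ 0 := ZMod.natCast_ne_zero_of_lt (by omega) (by omega)
  have hs_succ : (s : ZMod p) + 1 ≠ 0 := by
    exact_mod_cast ZMod.natCast_ne_zero_of_lt (p := p) (n := s + 1) (by omega) (by omega)
  have hsum : a + a' ≠ p := by
    intro h
    have : ((s : ZMod p) + 1) * a = 0 := by
      rw [add_mul, hmod', one_mul, ← Nat.cast_add, add_comm, h, ZMod.natCast_self]
    exact mul_ne_zero hs_succ (ZMod.natCast_ne_zero_of_lt (by omega) hap) this
  have hinv : 1 + (s : ZMod p)⁻¹ ≠ 0 := by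
    rw [← one_div, one_add_div hs, div_ne_zero_iff]
    exact ⟨hs_succ, hs⟩
  rw [eval_bPoly_one ha0 hap.le ha'0 ha'p hmod']
  simp only [_root_.mul_eq_zero, pow_eq_zero_iff', neg_eq_zero, inv_eq_zero, hs, hinv, ne_eq,
    false_and, false_or, or_false, ZMod.natCast_choose_eq_zero_iff (show a' - 1 < p by omega)]
  omega

theorem stmt12 (p s a a' : ℕ) [Fact p.Prime] (hodd : Odd p)
    (hs0 : 0 < s) (hsp : s < p - 1)
    (ha0 : 0 < a) (hap : a < p) (ha'0 : 0 < a') (ha'p : a' < p)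
    (hmod : a' ≡ s * a [MOD p]) :
    (bPoly p 1 s).eval (a : ZMod p) = 0 ↔ a + a' < p :=
  stmt12_general p s a a' hs0 hsp ha0 hap ha'0 ha'p hmod
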